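/- Let q be a nonzero rational with q ≠ -1. Combining the symmetry G̃_{n,q⁻¹}(1-x) = (-1)^{n+1} G̃_{n,q}(x) with the value at x = -1, one has for every n > 1: (-1)ⁿ·G̃_{n+1,q}(-1) = G̃_{n+1,q⁻¹}(2) = (n+1)(1+q) + q²·G̃_{n+1,q⁻¹}(0), where G̃_{n,q}(x) are the q-Genocchi polynomials with weight zero. -/

import Mathlib

/-!
Write `F_q(x)(t) = ∑ G̃_{n,q}(x) tⁿ/n!`, so that `F_q(x) (q eᵗ + 1) = (1+q) t e^{xt}`.
Since `e^{(x+1)t} = eᵗ e^{xt}`, cancelling `q eᵗ + 1` gives `F_q(x+1) = eᵗ F_q(x)`, hence the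
difference equation `q G̃_{n+1,q}(x+1) + G̃_{n+1,q}(x) = (1+q)(n+1)xⁿ`.
Since `q e⁻ᵗ + 1 = q e⁻ᵗ (q⁻¹ eᵗ + 1)`, the substitution `t ↦ -t` gives
`F_{q⁻¹}(1-x)(t) = -F_q(x)(-t)`, that is `G̃_{n,q⁻¹}(1-x) = (-1)ⁿ⁺¹ G̃_{n,q}(x)`.
At `x = -1` this is the first equality; the difference equation for `q⁻¹` at `x = 1` and
`x = 0` gives the second.
-/

open PowerSeries

theorem PowerSeries.rescale_C {R : Type*} [CommSemiring R] (a r : R) : rescale a (C r) = C r := by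
  ext n
  rcases n with _ | n <;> simp [coeff_C]

theorem PowerSeries.C_mul_exp_add_one_ne_zero {A : Type*} [CommRing A] [Algebra ℚ A]
    [Nontrivial A] (a : A) : C a * exp A + 1 ≠ 0 := by
  intro h
  have h0 : a + 1 = 0 := by simpa using congrArg constantCoeff h
  have h1 : a = 0 := by simpa [coeff_exp, coeff_one] using congrArg (coeff 1) h
  simp [h1] at h0

section

variable {K : Type*} [Field K] [CharZero K]

theorem rescale_neg_one_C_mul_exp_add_one_mul {q : K} (hq : q ≠ 0) :
    rescale (-1) (C q * exp K + 1) * (C q⁻¹ * exp K) = C q⁻¹ * exp K + 1 := by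
  have hexp : exp K * rescale (-1) (exp K) = 1 := exp_mul_exp_neg_eq_one
  have hC : C q⁻¹ * C q = 1 := by rw [← map_mul, inv_mul_cancel₀ hq, map_one]
  calc rescale (-1) (C q * exp K + 1) * (C q⁻¹ * exp K)
      = C q⁻¹ * C q * (exp K * rescale (-1) (exp K)) + C q⁻¹ * exp K := by
        rw [map_add, map_mul, rescale_C, map_one]; ring
    _ = C q⁻¹ * exp K + 1 := by rw [hC, hexp]; ring

theorem coeff_succ_C_mul_X_mul_rescale_exp (c x : K) (n : ℕ) :
    coeff (n + 1) (C c * X * rescale x (exp K)) = c * x ^ n / n.factorial := by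
  rw [mul_assoc, coeff_C_mul, coeff_succ_X_mul, coeff_rescale, coeff_exp]
  simp only [map_div₀, map_one, map_natCast]
  ring

def genocchiEGF (G : ℕ → K → K) (x : K) : K⟦X⟧ := mk fun n => G n x / n.factorial

/-- `G n x` plays the role of `G̃_{n,q}(x)`; the generating identity is stated with the
denominator `q eᵗ + 1` cleared. -/
def IsQGenocchiWeightZero (q : K) (G : ℕ → K → K) : Prop :=
  ∀ x : K, genocchiEGF G x * (C q * exp K + 1) = C (1 + q) * X * rescale x (exp K)

namespace IsQGenocchiWeightZero

variable {q : K} {G G' : ℕ → K → K}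

theorem genocchiEGF_add_one (h : IsQGenocchiWeightZero q G) (x : K) :
    genocchiEGF G (x + 1) = exp K * genocchiEGF G x := by
  refine mul_right_cancel₀ (C_mul_exp_add_one_ne_zero q) ?_
  rw [h, mul_assoc (exp K), h, ← exp_mul_exp_eq_exp_add x 1, rescale_one, RingHom.id_apply]
  ring

theorem C_mul_genocchiEGF_add_one_add (h : IsQGenocchiWeightZero q G) (x : K) :
    C q * genocchiEGF G (x + 1) + genocchiEGF G x = C (1 + q) * X * rescale x (exp K) := by
  rw [h.genocchiEGF_add_one, ← h x]
  ring

theorem add_one_recurrence (h : IsQGenocchiWeightZero q G) (x : K) (n : ℕ) :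
    q * G (n + 1) (x + 1) + G (n + 1) x = (1 + q) * (n + 1) * x ^ n := by
  have hcoeff := congrArg (coeff (n + 1)) (h.C_mul_genocchiEGF_add_one_add x)
  rw [coeff_succ_C_mul_X_mul_rescale_exp, map_add, coeff_C_mul] at hcoeff
  simp only [genocchiEGF, coeff_mk, Nat.factorial_succ, Nat.cast_mul] at hcoeff
  have : (n.factorial : K) ≠ 0 := Nat.cast_ne_zero.mpr n.factorial_ne_zero
  field_simp at hcoeff
  push_cast at hcoeff
  linear_combination hcoeff

theorem genocchiEGF_inv_one_sub (h : IsQGenocchiWeightZero q G)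
    (h' : IsQGenocchiWeightZero q⁻¹ G') (hq : q ≠ 0) (x : K) :
    genocchiEGF G' (1 - x) = -rescale (-1) (genocchiEGF G x) := by
  refine mul_right_cancel₀ (C_mul_exp_add_one_ne_zero q⁻¹) ?_
  have hC : C (1 + q⁻¹) = C (1 + q) * C q⁻¹ := by
    rw [← map_mul, add_mul, one_mul, mul_inv_cancel₀ hq, add_comm]
  have hexp : rescale (-x) (exp K) * exp K = rescale (1 - x) (exp K) := by
    rw [sub_eq_neg_add, ← exp_mul_exp_eq_exp_add, rescale_one, RingHom.id_apply]
  calc genocchiEGF G' (1 - x) * (C q⁻¹ * exp K + 1)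
      = C (1 + q⁻¹) * X * rescale (1 - x) (exp K) := h' (1 - x)
    _ = -rescale (-1) (C (1 + q) * X * rescale x (exp K)) * (C q⁻¹ * exp K) := by
        rw [map_mul, map_mul, rescale_C, rescale_neg_one_X, rescale_rescale, mul_neg_one, hC,
          ← hexp]
        ring
    _ = -rescale (-1) (genocchiEGF G x) * (C q⁻¹ * exp K + 1) := by
        rw [← h x, map_mul, ← rescale_neg_one_C_mul_exp_add_one_mul hq]
        ring

theorem inv_apply_one_sub (h : IsQGenocchiWeightZero q G)
    (h' : IsQGenocchiWeightZero q⁻¹ G') (hq : q ≠ 0) (x : K) (n : ℕ) :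
    G' n (1 - x) = (-1) ^ (n + 1) * G n x := by
  have hcoeff := congrArg (coeff n) (h.genocchiEGF_inv_one_sub h' hq x)
  simp only [genocchiEGF, map_neg, coeff_rescale, coeff_mk] at hcoeff
  have : (n.factorial : K) ≠ 0 := Nat.cast_ne_zero.mpr n.factorial_ne_zero
  field_simp at hcoeff
  linear_combination hcoeff

end IsQGenocchiWeightZero
end

theorem qGenocchi_reflection_at_two_general (q : ℚ) (hq0 : q ≠ 0)
    (G G' : ℕ → ℚ → ℚ)
    (hG : ∀ x : ℚ, (PowerSeries.mk fun n => G n x / n.factorial) *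
        (PowerSeries.C (R := ℚ) q * PowerSeries.exp ℚ + 1) =
        PowerSeries.C (R := ℚ) (1 + q) * PowerSeries.X * PowerSeries.rescale x (PowerSeries.exp ℚ))
    (hG' : ∀ x : ℚ, (PowerSeries.mk fun n => G' n x / n.factorial) *
        (PowerSeries.C (R := ℚ) q⁻¹ * PowerSeries.exp ℚ + 1) =
        PowerSeries.C (R := ℚ) (1 + q⁻¹) * PowerSeries.X * PowerSeries.rescale x (PowerSeries.exp ℚ)) :
    ∀ n : ℕ, 1 < n →
      (-1 : ℚ) ^ n * G (n + 1) (-1) = G' (n + 1) 2 ∧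
      G' (n + 1) 2 = (n + 1 : ℚ) * (1 + q) + q ^ 2 * G' (n + 1) 0 := by
  have hG : IsQGenocchiWeightZero q G := hG
  have hG' : IsQGenocchiWeightZero q⁻¹ G' := hG'
  intro n hn
  have at_two : G' (n + 1) 2 = (-1) ^ (n + 2) * G (n + 1) (-1) := by
    simpa [show (1 : ℚ) - -1 = 2 by norm_num] using hG.inv_apply_one_sub hG' hq0 (-1) (n + 1)
  have at_one : q⁻¹ * G' (n + 1) 2 + G' (n + 1) 1 = (1 + q⁻¹) * (n + 1) := by
    simpa [one_add_one_eq_two] using hG'.add_one_recurrence 1 n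
  have at_zero : q⁻¹ * G' (n + 1) 1 + G' (n + 1) 0 = 0 := by
    simpa [zero_pow (by omega : n ≠ 0)] using hG'.add_one_recurrence 0 n
  constructor
  · rw [at_two]; ring
  · field_simp at at_one at_zero
    linear_combination at_one - q * at_zero

/-- (-1)ⁿ·G̃_{n+1,q}(-1) = G̃_{n+1,q⁻¹}(2) = (n+1)(1+q) + q²·G̃_{n+1,q⁻¹}(0)
for n > 1. -/
theorem qGenocchi_reflection_at_two (q : ℚ) (hq1 : q ≠ -1) (hq0 : q ≠ 0)
    (G G' : ℕ → ℚ → ℚ)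
    (hG : ∀ x : ℚ, (PowerSeries.mk fun n => G n x / n.factorial) *
        (PowerSeries.C (R := ℚ) q * PowerSeries.exp ℚ + 1) =
        PowerSeries.C (R := ℚ) (1 + q) * PowerSeries.X * PowerSeries.rescale x (PowerSeries.exp ℚ))
    (hG' : ∀ x : ℚ, (PowerSeries.mk fun n => G' n x / n.factorial) *
        (PowerSeries.C (R := ℚ) q⁻¹ * PowerSeries.exp ℚ + 1) =
        PowerSeries.C (R := ℚ) (1 + q⁻¹) * PowerSeries.X * PowerSeries.rescale x (PowerSeries.exp ℚ)) :
    ∀ n : ℕ, 1 < n →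
      (-1 : ℚ) ^ n * G (n + 1) (-1) = G' (n + 1) 2 ∧
      G' (n + 1) 2 = (n + 1 : ℚ) * (1 + q) + q ^ 2 * G' (n + 1) 0 :=
  qGenocchi_reflection_at_two_general q hq0 G G' hG hG'
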